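/- If Σ ⊆ Σ' and T (over Σ) and T' (over Σ') are Σ-equivalent theories, and O' is a propagator for T', then the operator O defined by O(Ĩ) = restriction to Σ of O'(Ĩ + completely-unknown structure on Σ'∖Σ) is a propagator for T; moreover O is monotone whenever O' is. -/
import Mathlib

inductive Four : Type
  | t | f | u | i
deriving DecidableEq

namespace Four

/-- Belnap inverse -/
def inv : Four → Four
  | t => f
  | f => t
  | u => u
  | i => i

/-- precision order -/
def lep : Four → Four → Prop
  | u, _ => True
  | t, t => True
  | f, f => True
  | _, i => True
  | _, _ => False

/-- truth order -/
def leT : Four → Four → Prop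
  | f, _ => True
  | _, t => True
  | u, u => True
  | i, i => True
  | _, _ => False

/-- glb in the truth order -/
def meetT : Four → Four → Four
  | f, _ => f
  | _, f => f
  | t, y => y
  | x, t => x
  | u, u => u
  | i, i => i
  | u, i => f
  | i, u => f

/-- lub in the truth order -/
def joinT : Four → Four → Four
  | t, _ => t
  | _, t => t
  | f, y => y
  | x, f => x
  | u, u => u
  | i, i => i
  | u, i => t
  | i, u => t

/-- lub in the precision order -/
def joinP : Four → Four → Four
  | u, y => y
  | x, u => x
  | i, _ => i
  | _, i => i
  | t, t => t
  | f, f => f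
  | t, f => i
  | f, t => i

open Classical in
/-- glb of a set in the truth order -/
noncomputable def sInfT (s : Set Four) : Four :=
  if f ∈ s then f
  else if u ∈ s ∧ i ∈ s then f
  else if u ∈ s then u
  else if i ∈ s then i
  else t

open Classical in
/-- lub of a set in the truth order -/
noncomputable def sSupT (s : Set Four) : Four :=
  if t ∈ s then t
  else if u ∈ s ∧ i ∈ s then t
  else if u ∈ s then u
  else if i ∈ s then i
  else f

open Classical in
/-- glb of a set in the precision order -/
noncomputable def sInfP (s : Set Four) : Four :=
  if u ∈ s then u
  else if t ∈ s ∧ f ∈ s then u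
  else if t ∈ s then t
  else if f ∈ s then f
  else i

open Classical in
/-- lub of a set in the precision order -/
noncomputable def sSupP (s : Set Four) : Four :=
  if i ∈ s then i
  else if t ∈ s ∧ f ∈ s then i
  else if t ∈ s then t
  else if f ∈ s then f
  else u

end Four

open Classical in
/-- identification of a pair of classical truth values with a four-valued truth value:
(T,F) = t, (F,T) = f, (F,F) = u, (T,T) = i -/
noncomputable def pairFour (a b : Prop) : Four :=
  if a then (if b then Four.i else Four.t)
  else (if b then Four.f else Four.u)
/-- first-order formulas over a relational vocabulary, with variables of type `V`
(nested abstract syntax: a quantifier binds a fresh variable, `none`) -/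
inductive Fml (P : Type) (ar : P → ℕ) : Type → Type 1
  | atom {V : Type} (p : P) (ts : Fin (ar p) → V) : Fml P ar V
  | not {V : Type} (φ : Fml P ar V) : Fml P ar V
  | and {V : Type} (φ χ : Fml P ar V) : Fml P ar V
  | or {V : Type} (φ χ : Fml P ar V) : Fml P ar V
  | all {V : Type} (φ : Fml P ar (Option V)) : Fml P ar V
  | ex {V : Type} (φ : Fml P ar (Option V)) : Fml P ar V

/-- four-valued structures -/
abbrev Struc (P : Type) (ar : P → ℕ) (D : Type) : Type := (p : P) → (Fin (ar p) → D) → Four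
/-- two-valued (classical) structures -/
abbrev Struc2 (P : Type) (ar : P → ℕ) (D : Type) : Type := (p : P) → (Fin (ar p) → D) → Prop

variable {P D : Type} {ar : P → ℕ}

/-- four-valued evaluation: ¬ is Belnap inverse, ∧/∀ glb in the truth order,
∨/∃ lub in the truth order -/
noncomputable def eval (Iv : Struc P ar D) : {V : Type} → (V → D) → Fml P ar V → Four
  | _, θ, .atom p ts => Iv p fun k => θ (ts k)
  | _, θ, .not φ => (eval Iv θ φ).inv
  | _, θ, .and φ χ => Four.meetT (eval Iv θ φ) (eval Iv θ χ)
  | _, θ, .or φ χ => Four.joinT (eval Iv θ φ) (eval Iv θ χ)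
  | _, θ, .all φ => Four.sInfT {v | ∃ d : D, v = eval Iv (fun o => Option.elim o d θ) φ}
  | _, θ, .ex φ => Four.sSupT {v | ∃ d : D, v = eval Iv (fun o => Option.elim o d θ) φ}

/-- classical two-valued satisfaction -/
def sat (Iv : Struc2 P ar D) : {V : Type} → (V → D) → Fml P ar V → Prop
  | _, θ, .atom p ts => Iv p fun k => θ (ts k)
  | _, θ, .not φ => ¬ sat Iv θ φ
  | _, θ, .and φ χ => sat Iv θ φ ∧ sat Iv θ χ
  | _, θ, .or φ χ => sat Iv θ φ ∨ sat Iv θ χ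
  | _, θ, .all φ => ∀ d : D, sat Iv (fun o => Option.elim o d θ) φ
  | _, θ, .ex φ => ∃ d : D, sat Iv (fun o => Option.elim o d θ) φ

/-- a formula contains no occurrence of negation -/
def negFree : {V : Type} → Fml P ar V → Prop
  | _, .atom _ _ => True
  | _, .not _ => False
  | _, .and φ χ => negFree φ ∧ negFree χ
  | _, .or φ χ => negFree φ ∧ negFree χ
  | _, .all φ => negFree φ
  | _, .ex φ => negFree φ

/-- the simultaneous ct/cf transformation; the first component is ctφ, the second cfφ;
the vocabulary `P ⊕ P` has `ctP = Sum.inl P` and `cfP = Sum.inr P` -/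
def ctf : {V : Type} → Fml P ar V →
    Fml (P ⊕ P) (Sum.elim ar ar) V × Fml (P ⊕ P) (Sum.elim ar ar) V
  | _, .atom p ts => (.atom (.inl p) ts, .atom (.inr p) ts)
  | _, .not φ => ((ctf φ).2, (ctf φ).1)
  | _, .and φ χ => (.and (ctf φ).1 (ctf χ).1, .or (ctf φ).2 (ctf χ).2)
  | _, .or φ χ => (.or (ctf φ).1 (ctf χ).1, .and (ctf φ).2 (ctf χ).2)
  | _, .all φ => (.all (ctf φ).1, .ex (ctf φ).2)
  | _, .ex φ => (.ex (ctf φ).1, .all (ctf φ).2)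

/-- the two-valued encoding of a four-valued structure -/
def enc (Iv : Struc P ar D) : Struc2 (P ⊕ P) (Sum.elim ar ar) D :=
  fun q => match q with
  | .inl p => fun ds => Four.lep .t (Iv p ds)
  | .inr p => fun ds => Four.lep .f (Iv p ds)

/-- pointwise precision order on structures -/
def slep (I J : Struc P ar D) : Prop := ∀ p ds, (I p ds).lep (J p ds)

/-- pointwise truth order on four-valued structures -/
def sleT (I J : Struc P ar D) : Prop := ∀ p ds, (I p ds).leT (J p ds)

/-- a four-valued structure is two-valued -/
def twoVal (I : Struc P ar D) : Prop := ∀ p ds, I p ds = Four.t ∨ I p ds = Four.f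

/-- `M` is a model of the theory `T` (a set of sentences) -/
def models (M : Struc P ar D) (T : Set (Fml P ar Empty)) : Prop :=
  ∀ φ ∈ T, eval M (fun x => x.elim) φ = Four.t

/-- `O` is a propagator for `T`: inflationary in the precision order, and every
two-valued model of `T` above the input stays above the output -/
def IsPropagator (T : Set (Fml P ar Empty)) (O : Struc P ar D → Struc P ar D) : Prop :=
  (∀ I, slep I (O I)) ∧
  ∀ I M, twoVal M → models M T → slep I M → slep (O I) M

/-- combining a Σ-structure with a structure on the extra symbols into a Σ'-structure -/
def combine {P Q D : Type} {ar : P → ℕ} {arQ : Q → ℕ} (I : Struc P ar D)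
    (K : Struc Q arQ D) : Struc (P ⊕ Q) (Sum.elim ar arQ) D :=
  fun q => match q with
  | .inl p => I p
  | .inr q' => K q'

/-- If T (over Σ) and T' (over Σ' = Σ ⊕ extra symbols) are Σ-equivalent and O' is a
propagator for T', then the operator mapping Ĩ to the Σ-restriction of
O'(Ĩ + completely-unknown structure) is a propagator for T, monotone whenever O' is. -/
theorem restricted_propagator {P Q D : Type} {ar : P → ℕ} {arQ : Q → ℕ}
    (T : Set (Fml P ar Empty)) (T' : Set (Fml (P ⊕ Q) (Sum.elim ar arQ) Empty))
    (hequiv : ∀ I : Struc P ar D, twoVal I →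
      (models I T ↔ ∃ K : Struc Q arQ D, twoVal K ∧ models (combine I K) T'))
    (O' : Struc (P ⊕ Q) (Sum.elim ar arQ) D → Struc (P ⊕ Q) (Sum.elim ar arQ) D)
    (hO' : IsPropagator T' O') :
    IsPropagator T (fun I p => O' (combine I (fun _ _ => Four.u)) (Sum.inl p)) ∧
    ((∀ I' J', slep I' J' → slep (O' I') (O' J')) →
      ∀ I J : Struc P ar D, slep I J →
        slep (fun p => O' (combine I (fun _ _ => Four.u)) (Sum.inl p))
          (fun p => O' (combine J (fun _ _ => Four.u)) (Sum.inl p))) := by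
  constructor
  · constructor
    · intro I p ds
      exact hO'.1 (combine I (fun _ _ => Four.u)) (Sum.inl p) ds
    · intro I M hM2 hMT hIM
      obtain ⟨K, hK2, hKT⟩ := (hequiv M hM2).1 hMT
      have h2 : twoVal (combine M K) := by
        intro q ds; cases q with
        | inl p => exact hM2 p ds
        | inr q' => exact hK2 q' ds
      have hle : slep (combine I (fun _ _ => Four.u)) (combine M K) := by
        intro q ds; cases q with
        | inl p => exact hIM p ds
        | inr q' => show Four.lep Four.u (K q' ds); cases (K q' ds) <;> trivial
      intro p ds
      exact hO'.2 _ _ h2 hKT hle (Sum.inl p) ds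
  · intro hmono I J hIJ p ds
    apply hmono
    intro q ds'; cases q with
    | inl p' => exact hIJ p' ds'
    | inr q' => show Four.lep Four.u Four.u; trivial
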